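/- arXiv:1801.07415 — 4 statements merged into one kernel-verified Lean document; each statement's English description precedes it below -/
import Mathlib

section
/- Let f : ℂ → ℂ be entire with f(0) ≠ 0, and suppose f admits the genus-one Weierstrass product representation f(z) = f(0) · ∏_{n=1}^∞ (1 − z/a_n) e^{z/a_n}, where (a_n) is the sequence of zeros of f (all nonzero) and Σ_{n=1}^∞ 1/|a_n|² < ∞. Then for every integer m ≥ 2, the m-th Taylor coefficient at 0 of log(f(z)/f(0)) (i.e. (1/m!) times the m-th derivative at 0 of any holomorphic logarithm of f/f(0) near 0) equals −(1/m) Σ_{n=1}^∞ 1/a_n^m, the series on the right converging absolutely. -/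
open Complex Filter Topology

open FormalMultilinearSeries

open scoped NNReal

/-!
Near `0` each factor is `exp (log (1 - z / a n) + z / a n)`, and
`log (1 - w) + w = -∑_{k ≥ 2} w ^ k / k`. Since `∑ ‖a n‖⁻² < ∞` forces the `‖a n‖` to be bounded
below, the double series over `(n, k)` converges absolutely for small `z`; summing it by columns
shows that `∑_k (-(1/k) ∑ₙ a n ^ (-k)) z ^ k` is a logarithm of `f z / f 0` near `0`. Two
continuous logarithms agreeing at `0` agree near `0`, so this power series is the Taylor series
of `g`.
-/

theorem HasSum.prod_fiberwise_right {α β γ : Type*} [AddCommMonoid α] [TopologicalSpace α]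
    [ContinuousAdd α] [RegularSpace α] {f : β × γ → α} {g : γ → α} {a : α} (ha : HasSum f a)
    (hf : ∀ c, HasSum (fun b => f (b, c)) (g c)) : HasSum g a :=
  ((Equiv.prodComm γ β).hasSum_iff.2 ha).prod_fiberwise hf

theorem Complex.eventuallyEq_of_cexp_eventuallyEq {X : Type*} [TopologicalSpace X] {g h : X → ℂ}
    {x : X} (hg : ContinuousAt g x) (hh : ContinuousAt h x) (hgh : g x = h x)
    (hexp : ∀ᶠ y in 𝓝 x, exp (g y) = exp (h y)) : g =ᶠ[𝓝 x] h := by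
  have hsmall : ∀ᶠ y in 𝓝 x, ‖g y - h y‖ < Real.pi := by
    have : Tendsto (fun y => g y - h y) (𝓝 x) (𝓝 0) := by
      simpa [hgh] using hg.tendsto.sub hh.tendsto
    exact this.norm.eventually (gt_mem_nhds (by simpa using Real.pi_pos))
  filter_upwards [hsmall, hexp] with y hy hey
  have him := (abs_le.mp (abs_im_le_norm (g y - h y)))
  rw [← sub_eq_zero, ← log_exp (x := g y - h y) (by linarith) (by linarith), exp_sub, hey,
    div_self (exp_ne_zero _), log_one]

/-- The `k`-th term of the Taylor series of `log ((1 - w) * exp w)`. -/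
noncomputable def logFactorTerm (w : ℂ) (k : ℕ) : ℂ :=
  if 2 ≤ k then -(w ^ k / k) else 0

theorem hasSum_logFactorTerm {w : ℂ} (hw : ‖w‖ < 1) :
    HasSum (logFactorTerm w) (log (1 - w) + w) := by
  have h := (hasSum_taylorSeries_neg_log hw).neg.add (hasSum_ite_eq 1 w)
  rw [neg_neg] at h
  refine h.congr_fun fun k => ?_
  rcases lt_trichotomy k 1 with hk | rfl | hk
  · obtain rfl : k = 0 := by omega
    simp [logFactorTerm]
  · simp [logFactorTerm]
  · simp [logFactorTerm, show 2 ≤ k by omega, hk.ne']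

section GenusOne

variable {a : ℕ → ℂ}

theorem exists_pos_mul_norm_inv_le_one (hsum : Summable fun n => ‖a n‖⁻¹ ^ 2) :
    ∃ r : ℝ≥0, 0 < r ∧ ∀ n, r * ‖a n‖⁻¹ ≤ 1 := by
  obtain ⟨C, hC⟩ := hsum.tendsto_atTop_zero.bddAbove_range
  have hC1 : 0 < max 1 C := lt_max_of_lt_left one_pos
  refine ⟨(max 1 C)⁻¹.toNNReal, by simp [hC1], fun n => ?_⟩
  have hCn : ‖a n‖⁻¹ ^ 2 ≤ C := hC ⟨n, rfl⟩
  rw [Real.coe_toNNReal _ (inv_nonneg.2 hC1.le), inv_mul_le_one₀ hC1]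
  by_cases h1 : ‖a n‖⁻¹ ≤ 1
  · exact h1.trans (le_max_left _ _)
  · nlinarith [le_max_right 1 C]

theorem summable_norm_inv_pow (hsum : Summable fun n => ‖a n‖⁻¹ ^ 2) {k : ℕ} (hk : 2 ≤ k) :
    Summable fun n => ‖(a n ^ k)⁻¹‖ := by
  refine hsum.of_norm_bounded_eventually ?_
  have hsmall : ∀ᶠ n in cofinite, ‖a n‖⁻¹ ^ 2 ≤ 1 :=
    hsum.tendsto_cofinite_zero.eventually (ge_mem_nhds zero_lt_one)
  filter_upwards [hsmall] with n hn
  have hn1 : ‖a n‖⁻¹ ≤ 1 := by nlinarith [inv_nonneg.2 (norm_nonneg (a n))]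
  rw [norm_norm, norm_inv, norm_pow, ← inv_pow]
  exact pow_le_pow_of_le_one (by positivity) hn1 hk

/-- The Taylor coefficients at `0` of `log ∏ₙ (1 - z / a n) * exp (z / a n)`. -/
noncomputable def logCoeff (a : ℕ → ℂ) (k : ℕ) : ℂ :=
  if 2 ≤ k then -(1 / k) * ∑' n, (a n ^ k)⁻¹ else 0

variable {r : ℝ≥0}

theorem norm_logCoeff_mul_pow_le (hsum : Summable fun n => ‖a n‖⁻¹ ^ 2)
    (hr : ∀ n, r * ‖a n‖⁻¹ ≤ 1) (k : ℕ) :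
    ‖logCoeff a k‖ * r ^ k ≤ r ^ 2 * ∑' n, ‖a n‖⁻¹ ^ 2 := by
  unfold logCoeff
  split_ifs with hk
  · have hk1 : ‖(1 / k : ℂ)‖ ≤ 1 := by
      rw [norm_div, norm_one, norm_natCast]
      exact div_le_one_of_le₀ (by exact_mod_cast (by omega : 1 ≤ k)) (by positivity)
    have hterm : ∀ n, ‖(a n ^ k)⁻¹‖ * r ^ k ≤ r ^ 2 * ‖a n‖⁻¹ ^ 2 := fun n => by
      rw [norm_inv, norm_pow, ← inv_pow, ← mul_pow, mul_comm, ← mul_pow]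
      exact pow_le_pow_of_le_one (by positivity) (hr n) hk
    have hS := summable_norm_inv_pow hsum hk
    calc ‖-(1 / k : ℂ) * ∑' n, (a n ^ k)⁻¹‖ * r ^ k ≤ ‖∑' n, (a n ^ k)⁻¹‖ * r ^ k := by
          rw [norm_mul, norm_neg]
          gcongr
          exact mul_le_of_le_one_left (norm_nonneg _) hk1
      _ ≤ (∑' n, ‖(a n ^ k)⁻¹‖) * r ^ k := by gcongr; exact norm_tsum_le_tsum_norm hS
      _ = ∑' n, ‖(a n ^ k)⁻¹‖ * r ^ k := tsum_mul_right.symm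
      _ ≤ ∑' n, r ^ 2 * ‖a n‖⁻¹ ^ 2 := (hS.mul_right _).tsum_le_tsum hterm (hsum.mul_left _)
      _ = r ^ 2 * ∑' n, ‖a n‖⁻¹ ^ 2 := tsum_mul_left
  · simp only [norm_zero, zero_mul]
    exact mul_nonneg (by positivity) (tsum_nonneg fun n => by positivity)

theorem le_radius_ofScalars_logCoeff (hsum : Summable fun n => ‖a n‖⁻¹ ^ 2)
    (hr : ∀ n, r * ‖a n‖⁻¹ ≤ 1) :
    (r : ENNReal) ≤ (ofScalars ℂ (logCoeff a)).radius :=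
  le_radius_of_bound _ _ fun k => by
    rw [ofScalars_norm]
    exact norm_logCoeff_mul_pow_le hsum hr k

theorem summable_logFactorTerm_div (hsum : Summable fun n => ‖a n‖⁻¹ ^ 2) (hr0 : 0 < r)
    (hr : ∀ n, r * ‖a n‖⁻¹ ≤ 1) {z : ℂ} (hz : ‖z‖ < r) :
    Summable fun p : ℕ × ℕ => logFactorTerm (z / a p.1) p.2 := by
  have hq : ‖z‖ / r < 1 := (div_lt_one (by exact_mod_cast hr0)).2 hz
  refine Summable.of_norm_bounded ((hsum.mul_left ((r : ℝ) ^ 2)).mul_of_nonneg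
    (summable_geometric_of_lt_one (by positivity) hq) (fun n => by positivity)
    (fun k => by positivity)) fun ⟨n, k⟩ => ?_
  unfold logFactorTerm
  split_ifs with hk
  · have hnorm : ‖z / a n‖ = ‖z‖ / r * (r * ‖a n‖⁻¹) := by
      rw [norm_div]; field_simp
    calc ‖-((z / a n) ^ k / k)‖ ≤ ‖z / a n‖ ^ k := by
          rw [norm_neg, norm_div, norm_pow, norm_natCast]
          exact div_le_self (by positivity) (by exact_mod_cast (by omega : 1 ≤ k))
      _ = (‖z‖ / r) ^ k * (r * ‖a n‖⁻¹) ^ k := by rw [hnorm, mul_pow]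
      _ ≤ (‖z‖ / r) ^ k * (r * ‖a n‖⁻¹) ^ 2 :=
          mul_le_mul_of_nonneg_left (pow_le_pow_of_le_one (by positivity) (hr n) hk)
            (by positivity)
      _ = r ^ 2 * ‖a n‖⁻¹ ^ 2 * (‖z‖ / r) ^ k := by ring
  · rw [norm_zero]; positivity

theorem hasSum_logFactorTerm_div (hsum : Summable fun n => ‖a n‖⁻¹ ^ 2) (z : ℂ) (k : ℕ) :
    HasSum (fun n => logFactorTerm (z / a n) k) (logCoeff a k * z ^ k) := by
  unfold logFactorTerm logCoeff
  split_ifs with hk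
  · have h := ((summable_norm_inv_pow hsum hk).of_norm.hasSum).mul_left (-(1 / k) * z ^ k)
    rw [mul_right_comm] at h
    refine h.congr_fun fun n => ?_
    rw [div_pow]
    ring
  · simp

theorem hasProd_one_sub_mul_cexp (hsum : Summable fun n => ‖a n‖⁻¹ ^ 2) (hr0 : 0 < r)
    (hr : ∀ n, r * ‖a n‖⁻¹ ≤ 1) {z : ℂ} (hz : ‖z‖ < r) :
    HasProd (fun n => (1 - z / a n) * exp (z / a n))
      (exp (ofScalarsSum (logCoeff a) z)) := by
  have hF := summable_logFactorTerm_div hsum hr0 hr hz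
  have hw : ∀ n, ‖z / a n‖ < 1 := fun n => by
    calc ‖z / a n‖ = ‖z‖ / r * (r * ‖a n‖⁻¹) := by rw [norm_div]; field_simp
      _ ≤ ‖z‖ / r * 1 := by gcongr; exact hr n
      _ < 1 := by rw [mul_one]; exact (div_lt_one (by exact_mod_cast hr0)).2 hz
  have hrows : HasSum (fun n => log (1 - z / a n) + z / a n) _ :=
    hF.hasSum.prod_fiberwise fun n => (hasSum_logFactorTerm (hw n) :)
  have hcols : HasSum (fun k => logCoeff a k * z ^ k) _ :=
    hF.hasSum.prod_fiberwise_right (hasSum_logFactorTerm_div hsum z)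
  have hsumz : ofScalarsSum (logCoeff a) z = ∑' q, _ :=
    (ofScalars_sum_eq _ z).trans hcols.tsum_eq
  rw [hsumz]
  refine hrows.cexp.congr_fun fun n => ?_
  have hne : 1 - z / a n ≠ 0 := sub_ne_zero.2 fun h => by simpa [← h] using hw n
  rw [Function.comp_apply, exp_add, exp_log hne]

end GenusOne

theorem taylor_coeff_log_eq_neg_sum_inv_pow_zeros_general
    (f : ℂ → ℂ) (a : ℕ → ℂ)
    (hsum : Summable fun n => 1 / ‖a n‖ ^ 2)
    (hprod : ∀ z : ℂ,
      HasProd (fun n => (1 - z / a n) * Complex.exp (z / a n)) (f z / f 0))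
    (m : ℕ) (hm : 2 ≤ m)
    (g : ℂ → ℂ) (hg : AnalyticAt ℂ g 0) (hg0 : g 0 = 0)
    (hgf : ∀ᶠ z in 𝓝 (0 : ℂ), Complex.exp (g z) = f z / f 0) :
    Summable (fun n => ‖((a n) ^ m)⁻¹‖) ∧
      iteratedDeriv m g 0 / (Nat.factorial m : ℂ) =
        -(1 / (m : ℂ)) * ∑' n : ℕ, ((a n) ^ m)⁻¹ := by
  have hsum' : Summable fun n => ‖a n‖⁻¹ ^ 2 := by simpa only [one_div, inv_pow] using hsum
  obtain ⟨r, hr0, hr⟩ := exists_pos_mul_norm_inv_le_one hsum'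
  have hp : HasFPowerSeriesAt (ofScalarsSum (logCoeff a)) (ofScalars ℂ (logCoeff a)) 0 :=
    ((ofScalars ℂ (logCoeff a)).hasFPowerSeriesOnBall ((ENNReal.coe_pos.2 hr0).trans_le
      (le_radius_ofScalars_logCoeff hsum' hr))).hasFPowerSeriesAt
  have hexp : ∀ᶠ z in 𝓝 0, exp (g z) = exp (ofScalarsSum (logCoeff a) z) := by
    filter_upwards [hgf, Metric.ball_mem_nhds 0 hr0] with z hgz hz
    rw [hgz]
    exact (hprod z).unique (hasProd_one_sub_mul_cexp hsum' hr0 hr (by simpa using hz))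
  have hgp := eventuallyEq_of_cexp_eventuallyEq hg.continuousAt hp.continuousAt
    (by simp [hg0, logCoeff]) hexp
  have hcoeff := congr_arg (·.coeff m)
    (hg.hasFPowerSeriesAt.eq_formalMultilinearSeries (hp.congr hgp.symm))
  refine ⟨summable_norm_inv_pow hsum' hm, ?_⟩
  simpa [logCoeff, hm] using hcoeff

/-- **Sum rules from the genus-one product.**
Let `f` be entire with `f 0 ≠ 0`, admitting the genus-one Weierstrass product
`f z = f 0 · ∏_n (1 - z/a n) exp (z/a n)` over its (nonzero) zeros `a n`, with
`Σ 1/‖a n‖² < ∞`.  Then for every `m ≥ 2` the series `Σ_n 1/a n ^ m` converges absolutely,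
and the `m`-th Taylor coefficient at `0` of any holomorphic logarithm `g` of `f/f 0`
(normalised by `g 0 = 0`) equals `-(1/m) Σ_n 1/a n ^ m`. -/
theorem taylor_coeff_log_eq_neg_sum_inv_pow_zeros
    (f : ℂ → ℂ) (a : ℕ → ℂ)
    (hf : Differentiable ℂ f) (hf0 : f 0 ≠ 0)
    (ha0 : ∀ n, a n ≠ 0)
    (hzeros : ∀ z : ℂ, f z = 0 ↔ ∃ n, a n = z)
    (hsum : Summable fun n => 1 / ‖a n‖ ^ 2)
    (hprod : ∀ z : ℂ,
      HasProd (fun n => (1 - z / a n) * Complex.exp (z / a n)) (f z / f 0))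
    (m : ℕ) (hm : 2 ≤ m)
    (g : ℂ → ℂ) (hg : AnalyticAt ℂ g 0) (hg0 : g 0 = 0)
    (hgf : ∀ᶠ z in 𝓝 (0 : ℂ), Complex.exp (g z) = f z / f 0) :
    Summable (fun n => ‖((a n) ^ m)⁻¹‖) ∧
      iteratedDeriv m g 0 / (Nat.factorial m : ℂ) =
        -(1 / (m : ℂ)) * ∑' n : ℕ, ((a n) ^ m)⁻¹ :=
  taylor_coeff_log_eq_neg_sum_inv_pow_zeros_general f a hsum hprod m hm g hg hg0 hgf
end

section
/- For every real t ≠ 0, T₊(1/2 + it) is real and equals (1/2) Re ξ₁(1 + 2it), while T₋(1/2 + it) is purely imaginary and equals (i/2) Im ξ₁(1 + 2it). Consequently the zeros of T₊ on the critical line occur exactly where Re ξ₁(1 + 2it) = 0 and those of T₋ exactly where Im ξ₁(1 + 2it) = 0. -/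
open Complex Filter Topology

lemma hasDerivAt_conj_conj {f : ℂ → ℂ} {f' z : ℂ} (h : HasDerivAt f f' ((starRingEnd ℂ) z)) :
    HasDerivAt (fun w => (starRingEnd ℂ) (f ((starRingEnd ℂ) w))) ((starRingEnd ℂ) f') z := by
  rw [hasDerivAt_iff_tendsto] at h ⊢
  have hc : Tendsto (fun w : ℂ => (starRingEnd ℂ) w) (𝓝 z) (𝓝 ((starRingEnd ℂ) z)) :=
    (Complex.continuous_conj.tendsto z)
  have := h.comp hc
  convert this using 2 with w
  simp only [Function.comp_apply, smul_eq_mul]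
  have key : (starRingEnd ℂ) (f ((starRingEnd ℂ) w)) - (starRingEnd ℂ) (f ((starRingEnd ℂ) z))
      - (w - z) * (starRingEnd ℂ) f'
      = (starRingEnd ℂ) (f ((starRingEnd ℂ) w) - f ((starRingEnd ℂ) z)
        - ((starRingEnd ℂ) w - (starRingEnd ℂ) z) * f') := by
    simp only [map_sub, map_mul, Complex.conj_conj]
  rw [key, RCLike.norm_conj, show (starRingEnd ℂ) w - (starRingEnd ℂ) z
      = (starRingEnd ℂ) (w - z) from (map_sub _ _ _).symm, RCLike.norm_conj]

lemma conj_completedZeta_of_lt_re {s : ℂ} (hs : 1 < re s) :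
    completedRiemannZeta ((starRingEnd ℂ) s) = (starRingEnd ℂ) (completedRiemannZeta s) := by
  have hs' : 1 < re ((starRingEnd ℂ) s) := by simpa using hs
  rw [completedZeta_eq_tsum_of_one_lt_re hs, completedZeta_eq_tsum_of_one_lt_re hs']
  rw [map_mul, map_mul]
  congr 1
  · congr 1
    · rw [show -(starRingEnd ℂ) s / 2 = (starRingEnd ℂ) (-s / 2) by
        simp [map_div₀, map_neg, Complex.conj_ofNat]]
      rw [Complex.cpow_conj _ _ (by
        rw [Complex.arg_ofReal_of_nonneg Real.pi_pos.le]; exact Real.pi_ne_zero.symm ∘ id)]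
      rw [Complex.conj_ofReal]
    · rw [show (starRingEnd ℂ) s / 2 = (starRingEnd ℂ) (s / 2) by
        simp [map_div₀, Complex.conj_ofNat]]
      exact Complex.Gamma_conj _
  · rw [show (starRingEnd ℂ) (∑' n : ℕ, 1 / (n : ℂ) ^ s)
        = ∑' n : ℕ, star (1 / (n : ℂ) ^ s) from tsum_star (f := fun n : ℕ => 1 / (n : ℂ) ^ s)]
    congr 1 with n
    simp only [star_def, map_div₀, map_one]
    congr 1
    rw [Complex.cpow_conj _ _ (by
      rw [Complex.natCast_arg]; exact Real.pi_ne_zero.symm ∘ id), Complex.conj_natCast]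

lemma conj_completedZeta₀ (s : ℂ) :
    completedRiemannZeta₀ ((starRingEnd ℂ) s) = (starRingEnd ℂ) (completedRiemannZeta₀ s) := by
  let G : ℂ → ℂ := fun w => (starRingEnd ℂ) (completedRiemannZeta₀ ((starRingEnd ℂ) w))
  have hG : Differentiable ℂ G := fun z =>
    (hasDerivAt_conj_conj ((differentiable_completedZeta₀ _).hasDerivAt)).differentiableAt
  have hEq : Set.EqOn G completedRiemannZeta₀ Set.univ := by
    apply AnalyticOnNhd.eqOn_of_preconnected_of_eventuallyEq
      (hG.differentiableOn.analyticOnNhd isOpen_univ)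
      (differentiable_completedZeta₀.differentiableOn.analyticOnNhd isOpen_univ)
      isPreconnected_univ (Set.mem_univ (2 : ℂ))
    · have hV : {z : ℂ | 1 < re z} ∈ 𝓝 (2 : ℂ) :=
        (continuous_re.isOpen_preimage _ isOpen_Ioi).mem_nhds (by simp)
      filter_upwards [hV] with w hw
      have h1 : 1 < re ((starRingEnd ℂ) w) := by simpa using hw
      have := completedRiemannZeta_eq ((starRingEnd ℂ) w)
      have h2 := completedRiemannZeta_eq w
      show (starRingEnd ℂ) (completedRiemannZeta₀ ((starRingEnd ℂ) w)) = completedRiemannZeta₀ w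
      have h3 : completedRiemannZeta₀ ((starRingEnd ℂ) w)
          = completedRiemannZeta ((starRingEnd ℂ) w) + 1 / (starRingEnd ℂ) w
            + 1 / (1 - (starRingEnd ℂ) w) := by rw [this]; ring
      rw [h3, conj_completedZeta_of_lt_re hw]
      simp only [map_add, map_div₀, map_one, map_sub, Complex.conj_conj]
      rw [h2]; ring
  have := hEq (Set.mem_univ s)
  rw [← this]
  simp only [G, Complex.conj_conj]

lemma conj_completedZeta (s : ℂ) :
    completedRiemannZeta ((starRingEnd ℂ) s) = (starRingEnd ℂ) (completedRiemannZeta s) := by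
  rw [completedRiemannZeta_eq, completedRiemannZeta_eq, conj_completedZeta₀]
  simp only [map_sub, map_div₀, map_one]

/-- `T₊(s) = (1/4)[ξ₁(2s) + ξ₁(2s-1)]`, where `ξ₁ = completedRiemannZeta`. -/
noncomputable def Tplus (s : ℂ) : ℂ :=
  (completedRiemannZeta (2 * s) + completedRiemannZeta (2 * s - 1)) / 4

/-- `T₋(s) = (1/4)[ξ₁(2s) - ξ₁(2s-1)]`, where `ξ₁ = completedRiemannZeta`. -/
noncomputable def Tminus (s : ℂ) : ℂ :=
  (completedRiemannZeta (2 * s) - completedRiemannZeta (2 * s - 1)) / 4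

/-- **Values of `T₊`, `T₋` on the critical line.**  For real `t ≠ 0`,
`T₊(1/2 + it) = (1/2) Re ξ₁(1 + 2it)` (real), and
`T₋(1/2 + it) = (i/2) Im ξ₁(1 + 2it)` (purely imaginary).  Consequently `T₊` vanishes at
`1/2 + it` exactly when `Re ξ₁(1 + 2it) = 0`, and `T₋` exactly when
`Im ξ₁(1 + 2it) = 0`. -/
theorem Tplus_Tminus_on_critical_line (t : ℝ) (ht : t ≠ 0) :
    Tplus (1 / 2 + t * I) = (((completedRiemannZeta (1 + 2 * t * I)).re : ℂ)) / 2 ∧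
    Tminus (1 / 2 + t * I) = I * (((completedRiemannZeta (1 + 2 * t * I)).im : ℂ)) / 2 ∧
    (Tplus (1 / 2 + t * I) = 0 ↔ (completedRiemannZeta (1 + 2 * t * I)).re = 0) ∧
    (Tminus (1 / 2 + t * I) = 0 ↔ (completedRiemannZeta (1 + 2 * t * I)).im = 0) := by
  have h2s : 2 * (1 / 2 + (t : ℂ) * I) = 1 + 2 * t * I := by ring
  have h2s1 : 2 * (1 / 2 + (t : ℂ) * I) - 1 = 2 * t * I := by ring
  set z := completedRiemannZeta (1 + 2 * t * I) with hz
  have hconj : completedRiemannZeta (2 * t * I) = (starRingEnd ℂ) z := by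
    have h1 : (starRingEnd ℂ) (1 + 2 * (t : ℂ) * I) = 1 - 2 * t * I := by
      simp only [map_add, map_mul, map_one, Complex.conj_ofReal, Complex.conj_I,
        Complex.conj_ofNat]
      ring
    rw [← completedRiemannZeta_one_sub, show (1 : ℂ) - 2 * t * I
        = (starRingEnd ℂ) (1 + 2 * t * I) from h1.symm, conj_completedZeta]
  have hp : Tplus (1 / 2 + t * I) = ((z.re : ℂ)) / 2 := by
    rw [Tplus, h2s1, h2s, hconj, ← hz, Complex.add_conj]
    push_cast; ring
  have hm : Tminus (1 / 2 + t * I) = I * ((z.im : ℂ)) / 2 := by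
    rw [Tminus, h2s1, h2s, hconj, ← hz, Complex.sub_conj]
    push_cast; ring
  refine ⟨hp, hm, ?_, ?_⟩
  · rw [hp]
    simp [div_eq_zero_iff, Complex.ofReal_eq_zero]
  · rw [hm]
    simp [div_eq_zero_iff, mul_eq_zero, I_ne_zero, Complex.ofReal_eq_zero]
end

section
/- The function T₊(s) = (1/4)[ξ₁(2s) + ξ₁(2s−1)] has a simple pole at s = 0 with residue −1/8, and lim_{s→0} (T₊(s) + 1/(8s)) = (3γ + π − 3 log(4π))/24, where γ is the Euler–Mascheroni constant. By the symmetry T₊(1−s) = T₊(s), it likewise has a simple pole at s = 1 with residue 1/8, i.e. lim_{s→1} (s−1) T₊(s) = 1/8. -/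
open Complex Filter Topology Real

lemma completedRiemannZeta_two : completedRiemannZeta 2 = (π : ℂ) / 6 := by
  have hπ : (π : ℂ) ≠ 0 := ofReal_ne_zero.mpr Real.pi_ne_zero
  have hΓ : Gammaℝ 2 = (π : ℂ)⁻¹ := by
    rw [Gammaℝ_def]
    norm_num [Complex.Gamma_one, cpow_neg_one]
  have h := riemannZeta_def_of_ne_zero (two_ne_zero (α := ℂ))
  rw [riemannZeta_two, hΓ] at h
  field_simp at h
  refine mul_right_cancel₀ hπ ?_
  linear_combination -(π : ℂ) * h / 6

lemma completedRiemannZeta_neg_one : completedRiemannZeta (-1) = (π : ℂ) / 6 := by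
  rw [show (-1 : ℂ) = 1 - 2 by norm_num, completedRiemannZeta_one_sub, completedRiemannZeta_two]

section Residues

variable {𝕜 : Type*} [NormedField 𝕜] {f : 𝕜 → 𝕜}

lemma tendsto_mul_nhdsNE_zero_of_tendsto_add_div {c L : 𝕜}
    (h : Tendsto (fun s => f s + c / s) (𝓝[≠] 0) (𝓝 L)) :
    Tendsto (fun s => s * f s) (𝓝[≠] 0) (𝓝 (-c)) := by
  have hid : Tendsto (fun s : 𝕜 => s) (𝓝[≠] 0) (𝓝 0) :=
    tendsto_nhdsWithin_of_tendsto_nhds tendsto_id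
  have := (hid.mul h).sub_const c
  rw [zero_mul, zero_sub] at this
  refine this.congr' ?_
  filter_upwards [self_mem_nhdsWithin] with s (hs : s ≠ 0)
  rw [mul_add, mul_div_cancel₀ c hs, add_sub_cancel_right]

lemma tendsto_sub_one_mul_nhdsNE_one_of_one_sub {c : 𝕜} (hf : ∀ s, f (1 - s) = f s)
    (h : Tendsto (fun s => s * f s) (𝓝[≠] 0) (𝓝 c)) :
    Tendsto (fun s => (s - 1) * f s) (𝓝[≠] 1) (𝓝 (-c)) := by
  have hreflect : Tendsto (fun s : 𝕜 => 1 - s) (𝓝[≠] 1) (𝓝[≠] 0) := by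
    have hcont : ContinuousWithinAt (fun s : 𝕜 => 1 - s) {1}ᶜ 1 := by fun_prop
    simpa using hcont.tendsto_nhdsWithin (t := {0}ᶜ) fun s (hs : s ≠ 1) h =>
      hs (sub_eq_zero.mp h).symm
  refine (h.comp hreflect).neg.congr fun s => ?_
  simp only [Function.comp_apply, hf]
  ring

end Residues

lemma Tplus_one_sub (s : ℂ) : Tplus (1 - s) = Tplus s := by
  rw [Tplus, Tplus, show 2 * (1 - s) - 1 = 1 - 2 * s by ring,
    show 2 * (1 - s) = 1 - (2 * s - 1) by ring, completedRiemannZeta_one_sub,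
    completedRiemannZeta_one_sub, add_comm]

/-- The part of `T₊` that is regular at `0`. -/
noncomputable def TplusRegular (s : ℂ) : ℂ :=
  (completedRiemannZeta₀ (2 * s) - 1 / (1 - 2 * s) + completedRiemannZeta (2 * s - 1)) / 4

lemma Tplus_add_div_eq_TplusRegular {s : ℂ} (hs : s ≠ 0) :
    Tplus s + 1 / 8 / s = TplusRegular s := by
  rw [Tplus, TplusRegular, completedRiemannZeta_eq (2 * s)]
  field_simp
  ring

lemma continuousAt_TplusRegular_zero : ContinuousAt TplusRegular 0 := by
  have hΛ₀ : ContinuousAt (fun s : ℂ => completedRiemannZeta₀ (2 * s)) 0 :=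
    (differentiable_completedZeta₀.continuous.comp (continuous_const_mul 2)).continuousAt
  have hpole : ContinuousAt (fun s : ℂ => 1 / (1 - 2 * s)) 0 :=
    continuousAt_const.div (by fun_prop) (by norm_num)
  have hΛ : ContinuousAt (fun s : ℂ => completedRiemannZeta (2 * s - 1)) 0 := by
    have hd : DifferentiableAt ℂ completedRiemannZeta (2 * 0 - 1) :=
      differentiableAt_completedZeta (by norm_num) (by norm_num)
    exact (hd.comp (0 : ℂ) (by fun_prop)).continuousAt
  exact ((hΛ₀.sub hpole).add hΛ).div_const 4

lemma TplusRegular_zero : TplusRegular 0 = (((3 * Real.eulerMascheroniConstant + Real.pi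
    - 3 * Real.log (4 * Real.pi)) / 24 : ℝ) : ℂ) := by
  rw [TplusRegular, mul_zero, zero_sub, completedRiemannZeta₀_zero, completedRiemannZeta_neg_one]
  push_cast [Complex.ofReal_log (by positivity : (0 : ℝ) ≤ 4 * π)]
  ring

/-- **`T₊` has simple poles at `0` and `1` with residues `-1/8` and `1/8`**, and
`lim_{s→0} (T₊(s) + 1/(8s)) = (3γ + π - 3 log(4π))/24` where `γ` is the Euler–Mascheroni
constant. -/
theorem Tplus_poles :
    Tendsto (fun s : ℂ => s * Tplus s) (𝓝[≠] 0) (𝓝 (-(1 / 8))) ∧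
    Tendsto (fun s : ℂ => Tplus s + 1 / (8 * s)) (𝓝[≠] 0)
      (𝓝 (((3 * Real.eulerMascheroniConstant + Real.pi
        - 3 * Real.log (4 * Real.pi)) / 24 : ℝ) : ℂ)) ∧
    Tendsto (fun s : ℂ => (s - 1) * Tplus s) (𝓝[≠] 1) (𝓝 (1 / 8)) := by
  have hreg : Tendsto (fun s : ℂ => Tplus s + 1 / 8 / s) (𝓝[≠] 0)
      (𝓝 (((3 * Real.eulerMascheroniConstant + Real.pi
        - 3 * Real.log (4 * Real.pi)) / 24 : ℝ) : ℂ)) := by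
    rw [← TplusRegular_zero]
    refine continuousAt_TplusRegular_zero.continuousWithinAt.tendsto.congr' ?_
    filter_upwards [self_mem_nhdsWithin] with s hs
    exact (Tplus_add_div_eq_TplusRegular hs).symm
  have hzero := tendsto_mul_nhdsNE_zero_of_tendsto_add_div hreg
  refine ⟨hzero, by simpa only [div_div] using hreg, ?_⟩
  simpa using tendsto_sub_one_mul_nhdsNE_one_of_one_sub Tplus_one_sub hzero
end

section
/- The function T₊(s) = (1/4)[ξ₁(2s) + ξ₁(2s−1)] extends holomorphically across s = 1/2 (the simple poles of ξ₁(2s) at s = 1/2 and of ξ₁(2s−1) at s = 1/2 cancel), and lim_{s→1/2} T₊(s) = (1/4)(γ − log(4π)), where γ is the Euler–Mascheroni constant. -/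
open Complex Filter Topology

noncomputable def TplusReg (s : ℂ) : ℂ :=
  (completedRiemannZeta₀ (2 * s) + completedRiemannZeta₀ (2 * s - 1)
    - 1 / (2 * s) - 1 / (2 - 2 * s)) / 4

lemma TplusReg_analyticAt : AnalyticAt ℂ TplusReg (1 / 2) := by
  have h : DifferentiableOn ℂ TplusReg ({0, 1}ᶜ : Set ℂ) := by
    intro s hs
    simp only [Set.mem_compl_iff, Set.mem_insert_iff, Set.mem_singleton_iff, not_or] at hs
    apply DifferentiableAt.differentiableWithinAt
    apply DifferentiableAt.div_const
    apply DifferentiableAt.sub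
    apply DifferentiableAt.sub
    apply DifferentiableAt.add
    · exact (differentiable_completedZeta₀.comp
        ((differentiable_const _).mul differentiable_id)).differentiableAt
    · exact (differentiable_completedZeta₀.comp
        (((differentiable_const _).mul differentiable_id).sub
          (differentiable_const _))).differentiableAt
    · exact (differentiable_const (1 : ℂ)).differentiableAt.div
        (differentiableAt_const (2 : ℂ)|>.mul differentiableAt_id)
        (by simpa using hs.1)
    · exact (differentiableAt_const (1 : ℂ)).div
        ((differentiableAt_const (2 : ℂ)).sub
          ((differentiableAt_const (2 : ℂ)).mul differentiableAt_id))
        (by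
          intro h
          apply hs.2
          have : (2 : ℂ) * s = 2 := by linear_combination -h
          field_simp at this
          exact this)
  have hopen : IsOpen ({0, 1}ᶜ : Set ℂ) := (Set.toFinite ({0,1} : Set ℂ)).isClosed.isOpen_compl
  exact h.analyticAt (hopen.mem_nhds (by norm_num [Set.mem_insert_iff]))

lemma TplusReg_eq {s : ℂ} (hs : s ≠ 1 / 2) : TplusReg s = Tplus s := by
  have h2s : (2 : ℂ) * s - 1 ≠ 0 := by
    intro h
    apply hs
    have : s = 1 / 2 := by linear_combination h / 2
    exact this
  rw [Tplus, TplusReg, completedRiemannZeta_eq, completedRiemannZeta_eq]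
  have h1 : (1 : ℂ) - (2 * s - 1) = 2 - 2 * s := by ring
  rw [h1]
  have hA : (1 : ℂ) / (1 - 2 * s) + 1 / (2 * s - 1) = 0 := by
    rw [show (1 : ℂ) - 2 * s = -(2 * s - 1) by ring, div_neg]
    ring
  linear_combination hA / 4

lemma TplusReg_half : TplusReg (1 / 2) =
    (((Real.eulerMascheroniConstant - Real.log (4 * Real.pi)) / 4 : ℝ) : ℂ) := by
  rw [TplusReg]
  rw [show (2 : ℂ) * (1 / 2) = 1 by norm_num, show (1 : ℂ) - 1 = 0 from sub_self 1]
  have h0 : completedRiemannZeta₀ (0 : ℂ) = completedRiemannZeta₀ 1 := by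
    rw [← completedRiemannZeta₀_one_sub 1, sub_self]
  rw [h0, completedRiemannZeta₀_one]
  have hlog : Complex.log (4 * (Real.pi : ℂ)) = (Real.log (4 * Real.pi) : ℂ) := by
    rw [show (4 : ℂ) * (Real.pi : ℂ) = ((4 * Real.pi : ℝ) : ℂ) by push_cast; ring,
      Complex.ofReal_log (by positivity)]
  rw [hlog]
  push_cast
  ring

/-- **`T₊` is regular at `s = 1/2`:** the simple poles of `ξ₁(2s)` and `ξ₁(2s-1)` at
`s = 1/2` cancel, so `T₊` extends holomorphically across `s = 1/2`, and
`lim_{s→1/2} T₊(s) = (1/4)(γ - log(4π))` where `γ` is the Euler–Mascheroni constant. -/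
theorem Tplus_regular_at_half :
    (∃ g : ℂ → ℂ, AnalyticAt ℂ g (1 / 2) ∧
      (∀ᶠ s in 𝓝[≠] ((1 : ℂ) / 2), g s = Tplus s) ∧
      g (1 / 2) = (((Real.eulerMascheroniConstant - Real.log (4 * Real.pi)) / 4 : ℝ) : ℂ)) ∧
    Tendsto Tplus (𝓝[≠] ((1 : ℂ) / 2))
      (𝓝 (((Real.eulerMascheroniConstant - Real.log (4 * Real.pi)) / 4 : ℝ) : ℂ)) := by
  have hev : ∀ᶠ s in 𝓝[≠] ((1 : ℂ) / 2), TplusReg s = Tplus s :=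
    eventually_nhdsWithin_of_forall (fun s hs => TplusReg_eq hs)
  refine ⟨⟨TplusReg, TplusReg_analyticAt, hev, TplusReg_half⟩, ?_⟩
  have hcont : Tendsto TplusReg (𝓝[≠] ((1 : ℂ) / 2))
      (𝓝 (((Real.eulerMascheroniConstant - Real.log (4 * Real.pi)) / 4 : ℝ) : ℂ)) := by
    rw [← TplusReg_half]
    exact (TplusReg_analyticAt.continuousAt.tendsto).mono_left nhdsWithin_le_nhds
  exact hcont.congr' hev
end
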